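/- arXiv:2212.14008 — 4 statements merged into one kernel-verified Lean document; each statement's English description precedes it below -/
import Mathlib

section
/- Let μ : ℝ → ℝ be locally absolutely continuous on (-∞, t₀), positive there, and satisfy μ'(t) ≤ -H(μ(t))/(c·μ(t)) for almost every t < t₀, where H : (0, ∞) → (0, ∞) is C¹ and c > 0. Let t₂ < t₀ and let g solve the backward Cauchy problem g(t₂) = μ(t₂), g'(t) = -H(g(t))/(c·g(t)). Then g exists on all of (-∞, t₂] and g(t) ≤ μ(t) for all t ≤ t₂. -/
/-!
Separation of variables. Put `f y = H y / (c y)` and `F y = ∫_{μ t₂}^y ds / f s`; the backward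
solution is `g t = F⁻¹ (t₂ - t)`. Along the supersolution `μ`, the function `τ ↦ F (μ τ) + τ` is
absolutely continuous with a.e. derivative `μ' / f (μ) + 1 ≤ 0`, so `t₂ - t ≤ F (μ t)` for `t ≤ t₂`.
By the intermediate value theorem `t₂ - t ∈ F '' [μ t₂, μ t]`, hence `g t` is defined and
`g t ≤ μ t`: the a priori bound by `μ` is what rules out blow-up.
-/

open Set MeasureTheory intervalIntegral Filter Topology Function

namespace AbsolutelyContinuousOnInterval

theorem of_dist_le_mul {X Y : Type*} [PseudoMetricSpace X] [PseudoMetricSpace Y]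
    {f : ℝ → X} {g : ℝ → Y} {a b K : ℝ} (hf : AbsolutelyContinuousOnInterval f a b)
    (h : ∀ x ∈ uIcc a b, ∀ y ∈ uIcc a b, dist (g x) (g y) ≤ K * dist (f x) (f y)) :
    AbsolutelyContinuousOnInterval g a b := by
  unfold AbsolutelyContinuousOnInterval at hf ⊢
  refine squeeze_zero' (Eventually.of_forall fun E ↦ Finset.sum_nonneg fun _ _ ↦ dist_nonneg)
    ?_ (by simpa using hf.const_mul K)
  filter_upwards [mem_inf_of_right (mem_principal_self _)] with E hE
  rw [Finset.mul_sum]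
  exact Finset.sum_le_sum fun i hi ↦ h _ (hE.1 i hi).1 _ (hE.1 i hi).2

theorem le_of_ae_deriv_nonpos {f : ℝ → ℝ} {a b : ℝ} (hf : AbsolutelyContinuousOnInterval f a b)
    (hab : a ≤ b) (hf' : ∀ᵐ x, x ∈ Icc a b → deriv f x ≤ 0) : f b ≤ f a := by
  have hint : 0 ≤ ∫ x in a..b, -deriv f x :=
    intervalIntegral.integral_nonneg_of_ae_restrict hab <|
      (ae_restrict_iff' measurableSet_Icc).2 <| by
        filter_upwards [hf'] with x hx hmem using neg_nonneg.2 (hx hmem)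
  rw [intervalIntegral.integral_neg, hf.integral_deriv_eq_sub] at hint
  linarith

end AbsolutelyContinuousOnInterval

theorem LipschitzOnWith.comp_absolutelyContinuousOnInterval {X Y : Type*} [PseudoMetricSpace X]
    [PseudoMetricSpace Y] {F : X → Y} {K : NNReal} {s : Set X} {μ : ℝ → X} {a b : ℝ}
    (hF : LipschitzOnWith K F s) (hμ : AbsolutelyContinuousOnInterval μ a b)
    (hmaps : MapsTo μ (uIcc a b) s) : AbsolutelyContinuousOnInterval (F ∘ μ) a b :=
  hμ.of_dist_le_mul fun _ hx _ hy ↦ hF.dist_le_mul _ (hmaps hx) _ (hmaps hy)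

theorem AntitoneOn.intervalIntegrable_of_ae_hasDerivAt {μ μ' : ℝ → ℝ} {a b : ℝ}
    (hμ : AntitoneOn μ (uIcc a b)) (hμ' : ∀ᵐ t, t ∈ uIcc a b → HasDerivAt μ (μ' t) t) :
    IntervalIntegrable μ' volume a b := by
  have hderiv : IntervalIntegrable (deriv μ) volume a b := by
    simpa [deriv.neg', Pi.neg_def] using hμ.neg.intervalIntegrable_deriv.neg
  refine hderiv.congr_ae <| (ae_restrict_iff' measurableSet_uIoc).2 ?_
  filter_upwards [hμ'] with t ht hmem using (ht (uIoc_subset_uIcc hmem)).deriv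

section IntegralRepresentation

variable {μ μ' : ℝ → ℝ} {t₀ : ℝ}
  (hμac : ∀ s t : ℝ, s ≤ t → t < t₀ → μ t - μ s = ∫ τ in s..t, μ' τ)
include hμac

theorem antitoneOn_of_sub_eq_integral (hμ' : ∀ᵐ t, t < t₀ → μ' t ≤ 0) :
    AntitoneOn μ (Iio t₀) := by
  intro s _ t ht hst
  have hint : 0 ≤ ∫ τ in s..t, -μ' τ :=
    intervalIntegral.integral_nonneg_of_ae_restrict hst <|
      (ae_restrict_iff' measurableSet_Icc).2 <| by
        filter_upwards [hμ'] with τ hτ hmem using neg_nonneg.2 (hτ (hmem.2.trans_lt ht))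
  rw [intervalIntegral.integral_neg, ← hμac s t hst ht] at hint
  linarith

theorem absolutelyContinuousOnInterval_of_sub_eq_integral {a b : ℝ}
    (hint : IntervalIntegrable μ' volume a b) (hab : a ≤ b) (hb : b < t₀) :
    AbsolutelyContinuousOnInterval μ a b := by
  refine (hint.absolutelyContinuousOnInterval_intervalIntegral left_mem_uIcc).of_dist_le_mul
    (K := 1) fun x hx y hy ↦ ?_
  rw [uIcc_of_le hab] at hx hy
  rw [one_mul, Real.dist_eq, Real.dist_eq, ← hμac a x hx.1 (hx.2.trans_lt hb),
    ← hμac a y hy.1 (hy.2.trans_lt hb), sub_sub_sub_cancel_right]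

end IntegralRepresentation

theorem StrictMonoOn.image_mem_nhds {F : ℝ → ℝ} {s : Set ℝ} {y : ℝ} (hmono : StrictMonoOn F s)
    (hcont : ContinuousOn F s) (hs : s ∈ 𝓝 y) : F '' s ∈ 𝓝 (F y) := by
  obtain ⟨ε, hε, hball⟩ := Metric.mem_nhds_iff.1 hs
  have hsub : Icc (y - ε / 2) (y + ε / 2) ⊆ s := fun x hx ↦ hball <| by
    rw [Metric.mem_ball, Real.dist_eq, abs_lt]; constructor <;> linarith [hx.1, hx.2]
  refine mem_of_superset (Icc_mem_nhds ?_ ?_) <|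
    (intermediate_value_Icc (by linarith) (hcont.mono hsub)).trans (image_mono hsub)
  · exact hmono (hsub ⟨le_rfl, by linarith⟩) (mem_of_mem_nhds hs) (by linarith)
  · exact hmono (mem_of_mem_nhds hs) (hsub ⟨by linarith, le_rfl⟩) (by linarith)

theorem StrictMonoOn.hasDerivAt_invFunOn {F F' : ℝ → ℝ} {s : Set ℝ} {y : ℝ} (hs : IsOpen s)
    (hmono : StrictMonoOn F s) (hF : ∀ x ∈ s, HasDerivAt F (F' x) x) (hy : y ∈ s)
    (hF'y : F' y ≠ 0) : HasDerivAt (invFunOn F s) (F' y)⁻¹ (F y) := by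
  have hleft : LeftInvOn (invFunOn F s) F s := hmono.injOn.leftInvOn_invFunOn
  have himage : F '' s ∈ 𝓝 (F y) :=
    hmono.image_mem_nhds (fun x hx ↦ (hF x hx).continuousAt.continuousWithinAt)
      (hs.mem_nhds hy)
  have hinv_mono : StrictMonoOn (invFunOn F s) (F '' s) := by
    rintro _ ⟨a, ha, rfl⟩ _ ⟨b, hb, rfl⟩ hab
    rw [hleft ha, hleft hb]
    exact (hmono.lt_iff_lt ha hb).1 hab
  have hcont : ContinuousAt (invFunOn F s) (F y) :=
    hinv_mono.continuousAt_of_image_mem_nhds himage <| by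
      rw [hleft.image_image, hleft hy]; exact hs.mem_nhds hy
  refine HasDerivAt.of_local_left_inverse hcont ?_ hF'y <|
    mem_of_superset himage (surjOn_image F s).rightInvOn_invFunOn
  rw [hleft hy]
  exact hF y hy

/-- The time the solution of `y' = -f y` takes to decrease from `y` to `y₀`. -/
noncomputable def flowTime (f : ℝ → ℝ) (y₀ y : ℝ) : ℝ := ∫ s in y₀..y, (f s)⁻¹

section FlowTime

variable {f : ℝ → ℝ} (hf : ContinuousOn f (Ioi 0)) (hfpos : ∀ y > 0, 0 < f y) {y₀ : ℝ}
  (hy₀ : 0 < y₀)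
include hf hfpos hy₀

theorem hasDerivAt_flowTime {y : ℝ} (hy : 0 < y) : HasDerivAt (flowTime f y₀) (f y)⁻¹ y := by
  have hinv : ContinuousOn (fun s ↦ (f s)⁻¹) (Ioi 0) := hf.inv₀ fun s hs ↦ (hfpos s hs).ne'
  refine integral_hasDerivAt_right ?_ (hinv.stronglyMeasurableAtFilter isOpen_Ioi y hy)
    (hinv.continuousAt (isOpen_Ioi.mem_nhds hy))
  exact (hinv.mono fun x hx ↦ (lt_min hy₀ hy).trans_le hx.1).intervalIntegrable

theorem strictMonoOn_flowTime : StrictMonoOn (flowTime f y₀) (Ioi 0) := by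
  refine strictMonoOn_of_deriv_pos (convex_Ioi 0)
    (fun y hy ↦ (hasDerivAt_flowTime hf hfpos hy₀ hy).continuousAt.continuousWithinAt) ?_
  intro y hy
  rw [interior_Ioi] at hy
  rw [(hasDerivAt_flowTime hf hfpos hy₀ hy).deriv]
  exact inv_pos.2 (hfpos y hy)

theorem exists_lipschitzOnWith_flowTime {m M : ℝ} (hm : 0 < m) :
    ∃ K, LipschitzOnWith K (flowTime f y₀) (Icc m M) := by
  have hsub : Icc m M ⊆ Ioi 0 := fun x hx ↦ hm.trans_le hx.1
  obtain ⟨C, hC⟩ := isCompact_Icc.exists_bound_of_continuousOn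
    ((hf.mono hsub).inv₀ fun s hs ↦ (hfpos s (hsub hs)).ne')
  refine ⟨‖C‖₊, (convex_Icc m M).lipschitzOnWith_of_nnnorm_hasDerivWithin_le
    (fun x hx ↦ (hasDerivAt_flowTime hf hfpos hy₀ (hsub hx)).hasDerivWithinAt) fun x hx ↦ ?_⟩
  rw [← NNReal.coe_le_coe, coe_nnnorm, coe_nnnorm]
  exact (hC x hx).trans (Real.le_norm_self C)

theorem hasDerivAt_invFunOn_flowTime_sub {t₂ t y : ℝ} (hy : 0 < y)
    (hyt : flowTime f y₀ y = t₂ - t) :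
    HasDerivAt (fun t ↦ invFunOn (flowTime f y₀) (Ioi 0) (t₂ - t)) (-f y) t := by
  have hinv := (strictMonoOn_flowTime hf hfpos hy₀).hasDerivAt_invFunOn isOpen_Ioi
    (fun x hx ↦ hasDerivAt_flowTime hf hfpos hy₀ hx) hy (inv_ne_zero (hfpos y hy).ne')
  rw [inv_inv, hyt] at hinv
  exact hinv.comp_const_sub t₂ t

end FlowTime

theorem sub_le_flowTime_of_supersolution {f μ μ' : ℝ → ℝ} {t₀ t t₂ : ℝ}
    (hf : ContinuousOn f (Ioi 0)) (hfpos : ∀ y > 0, 0 < f y) (hμpos : ∀ t < t₀, 0 < μ t)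
    (hμac : ∀ s t : ℝ, s ≤ t → t < t₀ → μ t - μ s = ∫ τ in s..t, μ' τ)
    (hμsuper : ∀ᵐ t, t < t₀ → HasDerivAt μ (μ' t) t ∧ μ' t ≤ -f (μ t))
    (ht : t ≤ t₂) (ht₂ : t₂ < t₀) : t₂ - t ≤ flowTime f (μ t₂) (μ t) := by
  have hIcc : Icc t t₂ ⊆ Iio t₀ := fun τ hτ ↦ hτ.2.trans_lt ht₂
  have hanti : AntitoneOn μ (Iio t₀) := antitoneOn_of_sub_eq_integral hμac <| by
    filter_upwards [hμsuper] with τ hτ hτt₀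
    exact (hτ hτt₀).2.trans (neg_nonpos.2 (hfpos _ (hμpos τ hτt₀)).le)
  -- `hμac` says nothing when `μ'` is not integrable (the integral is then `0`); integrability
  -- comes from the monotonicity of `μ`.
  have hμint : IntervalIntegrable μ' volume t t₂ :=
    (hanti.mono (uIcc_of_le ht ▸ hIcc)).intervalIntegrable_of_ae_hasDerivAt <| by
      filter_upwards [hμsuper] with τ hτ hmem
      exact (hτ (hIcc (uIcc_of_le ht ▸ hmem))).1
  have hmaps : MapsTo μ (uIcc t t₂) (Icc (μ t₂) (μ t)) := fun τ hτ ↦ by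
    rw [uIcc_of_le ht] at hτ
    exact ⟨hanti (hIcc hτ) (hIcc ⟨ht, le_rfl⟩) hτ.2, hanti (hIcc ⟨le_rfl, ht⟩) (hIcc hτ) hτ.1⟩
  have hμt₂ : 0 < μ t₂ := hμpos t₂ ht₂
  obtain ⟨K, hK⟩ := exists_lipschitzOnWith_flowTime hf hfpos hμt₂ (M := μ t) hμt₂
  have hac : AbsolutelyContinuousOnInterval (fun τ ↦ flowTime f (μ t₂) (μ τ) + τ) t t₂ :=
    (hK.comp_absolutelyContinuousOnInterval
      (absolutelyContinuousOnInterval_of_sub_eq_integral hμac hμint ht ht₂) hmaps).add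
      LipschitzWith.id.lipschitzOnWith.absolutelyContinuousOnInterval
  have hderiv : ∀ᵐ τ, τ ∈ Icc t t₂ → deriv (fun τ ↦ flowTime f (μ t₂) (μ τ) + τ) τ ≤ 0 := by
    filter_upwards [hμsuper] with τ hτ hmem
    obtain ⟨hμ', hle⟩ := hτ (hIcc hmem)
    have hμτ : 0 < μ τ := hμpos τ (hIcc hmem)
    have hfμτ : 0 < f (μ τ) := hfpos _ hμτ
    have hd : HasDerivAt (fun τ ↦ flowTime f (μ t₂) (μ τ) + τ) ((f (μ τ))⁻¹ * μ' τ + 1) τ :=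
      ((hasDerivAt_flowTime hf hfpos hμt₂ hμτ).comp τ hμ').add (hasDerivAt_id τ)
    have := mul_le_mul_of_nonneg_left hle (inv_nonneg.2 hfμτ.le)
    rw [mul_neg, inv_mul_cancel₀ hfμτ.ne'] at this
    rw [hd.deriv]
    linarith
  have h₀ : flowTime f (μ t₂) (μ t₂) = 0 := integral_same
  linarith [hac.le_of_ae_deriv_nonpos ht hderiv]

theorem exists_backward_solution_le_of_supersolution {f μ μ' : ℝ → ℝ} {t₀ t₂ : ℝ}
    (hf : ContinuousOn f (Ioi 0)) (hfpos : ∀ y > 0, 0 < f y) (hμpos : ∀ t < t₀, 0 < μ t)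
    (hμac : ∀ s t : ℝ, s ≤ t → t < t₀ → μ t - μ s = ∫ τ in s..t, μ' τ)
    (hμsuper : ∀ᵐ t, t < t₀ → HasDerivAt μ (μ' t) t ∧ μ' t ≤ -f (μ t)) (ht₂ : t₂ < t₀) :
    ∃ g : ℝ → ℝ, g t₂ = μ t₂ ∧ ∀ t ≤ t₂, HasDerivAt g (-f (g t)) t ∧ g t ≤ μ t := by
  have hμt₂ : 0 < μ t₂ := hμpos t₂ ht₂
  set F := flowTime f (μ t₂)
  have hFmono : StrictMonoOn F (Ioi 0) := strictMonoOn_flowTime hf hfpos hμt₂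
  set g : ℝ → ℝ := fun t ↦ invFunOn F (Ioi 0) (t₂ - t)
  have hsol : ∀ t ≤ t₂, ∃ y ∈ Icc (μ t₂) (μ t), g t = y ∧ HasDerivAt g (-f y) t := by
    intro t ht
    have hF₀ : F (μ t₂) = 0 := integral_same
    have hcomp : t₂ - t ≤ F (μ t) :=
      sub_le_flowTime_of_supersolution hf hfpos hμpos hμac hμsuper ht ht₂
    have hle : μ t₂ ≤ μ t :=
      (hFmono.le_iff_le hμt₂ (hμpos t (ht.trans_lt ht₂))).1 (by linarith)
    obtain ⟨y, hy, hFy⟩ := intermediate_value_Icc hle (fun x hx ↦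
      (hasDerivAt_flowTime hf hfpos hμt₂ (hμt₂.trans_le hx.1)).continuousAt.continuousWithinAt)
      ⟨by linarith, hcomp⟩
    have hypos : 0 < y := hμt₂.trans_le hy.1
    refine ⟨y, hy, ?_, hasDerivAt_invFunOn_flowTime_sub hf hfpos hμt₂ hypos hFy⟩
    show invFunOn F (Ioi 0) (t₂ - t) = y
    rw [← hFy]
    exact hFmono.injOn.leftInvOn_invFunOn hypos
  refine ⟨g, ?_, fun t ht ↦ ?_⟩
  · obtain ⟨y, hy, hgy, -⟩ := hsol t₂ le_rfl
    rw [hgy, le_antisymm hy.2 hy.1]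
  · obtain ⟨y, hy, hgy, hderiv⟩ := hsol t ht
    rw [hgy]
    exact ⟨hderiv, hy.2⟩

/-- Comparison principle: the backward solution of `g' = -H(g)/(c g)` with
`g(t₂) = μ(t₂)` exists on all of `(-∞, t₂]` and stays below `μ`. -/
theorem backward_comparison
    (H : ℝ → ℝ) (hH : ContDiffOn ℝ 1 H (Ioi 0)) (hHpos : ∀ x > 0, 0 < H x)
    (c : ℝ) (hc : 0 < c) (t₀ t₂ : ℝ) (ht₂ : t₂ < t₀)
    (μ μ' : ℝ → ℝ)
    (hμpos : ∀ t < t₀, 0 < μ t)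
    (hμac : ∀ s t : ℝ, s ≤ t → t < t₀ → μ t - μ s = ∫ τ in s..t, μ' τ)
    (hμderiv : ∀ᵐ t : ℝ, t < t₀ → HasDerivAt μ (μ' t) t ∧ μ' t ≤ -H (μ t) / (c * μ t)) :
    ∃ g : ℝ → ℝ, g t₂ = μ t₂ ∧
      ∀ t ≤ t₂, HasDerivAt g (-H (g t) / (c * g t)) t ∧ g t ≤ μ t := by
  set f : ℝ → ℝ := fun y ↦ H y / (c * y)
  have hf : ContinuousOn f (Ioi 0) :=
    hH.continuousOn.div (continuousOn_const.mul continuousOn_id) fun y hy ↦ (mul_pos hc hy).ne'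
  have hfpos : ∀ y > 0, 0 < f y := fun y hy ↦ div_pos (hHpos y hy) (mul_pos hc hy)
  have hμsuper : ∀ᵐ t, t < t₀ → HasDerivAt μ (μ' t) t ∧ μ' t ≤ -f (μ t) := by
    filter_upwards [hμderiv] with t ht hlt
    simpa only [f, neg_div] using ht hlt
  obtain ⟨g, hgt₂, hg⟩ :=
    exists_backward_solution_le_of_supersolution hf hfpos hμpos hμac hμsuper ht₂
  refine ⟨g, hgt₂, fun t ht ↦ ?_⟩
  simpa only [f, neg_div] using hg t ht
end

section
/- Let G : [0, F(t₀)] → ℝ be continuous convex with G(0) = 0, F smooth increasing with F(-∞) = 0, and let μ, μ₀ : (-∞, t₀) → [0, ∞) satisfy: there is t₁ < t₀ with μ(t) ≥ μ₀(t) for t ≤ t₁ and μ(t) ≤ μ₀(t) for t₁ < t < t₀, and ∫_{-∞}^{t₀} F'(t)μ(t) dt = ∫_{-∞}^{t₀} F'(t)μ₀(t) dt < ∞. Then ∫_{-∞}^{t₀} G'(F(t)) F'(t) μ(t) dt ≤ ∫_{-∞}^{t₀} G'(F(t)) F'(t) μ₀(t) dt, where G' is the left derivative of G. -/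
open Set MeasureTheory Real Filter

/-- A convex function on `Icc a b` is left-differentiable at interior points. -/
lemma convexOn_diffWithinAt_Iio {a b : ℝ} {G : ℝ → ℝ} (h : ConvexOn ℝ (Icc a b) G) {x : ℝ}
    (hx : x ∈ Ioo a b) : DifferentiableWithinAt ℝ G (Iio x) x := by
  have hxS : x ∈ Icc a b := Ioo_subset_Icc_self hx
  have hbS : b ∈ Icc a b := right_mem_Icc.2 (hx.1.le.trans hx.2.le)
  have hmono := h.slope_mono hxS
  have hsub : ∀ u ∈ Ioo a x, u ∈ Icc a b \ {x} := fun u hu =>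
    ⟨⟨hu.1.le, (hu.2.trans hx.2).le⟩, hu.2.ne⟩
  have Mf : MonotoneOn (slope G x) (Ioo a x) := fun u hu v hv huv =>
    hmono (hsub u hu) (hsub v hv) huv
  have hbdd : BddAbove (slope G x '' Ioo a x) := by
    refine ⟨slope G x b, ?_⟩
    rintro _ ⟨u, hu, rfl⟩
    exact hmono (hsub u hu) ⟨hbS, hx.2.ne'⟩ (hu.2.le.trans hx.2.le)
  have hne : (Ioo a x).Nonempty := nonempty_Ioo.2 hx.1
  have htend := Mf.tendsto_nhdsWithin_Ioo_left hne hbdd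
  have hd : HasDerivWithinAt G (sSup (slope G x '' Ioo a x)) (Iio x) x := by
    rw [hasDerivWithinAt_iff_tendsto_slope' self_notMem_Iio]
    exact htend
  exact hd.differentiableWithinAt

/-- Monotonicity of the left derivative of a convex function on interior points. -/
lemma convexOn_leftDeriv_mono {a b : ℝ} {G : ℝ → ℝ} (h : ConvexOn ℝ (Icc a b) G) {x y : ℝ}
    (hx : x ∈ Ioo a b) (hy : y ∈ Ioo a b) (hxy : x ≤ y) :
    derivWithin G (Iio x) x ≤ derivWithin G (Iio y) y := by
  rcases eq_or_lt_of_le hxy with rfl | hlt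
  · exact le_refl _
  have hxS : x ∈ Icc a b := Ioo_subset_Icc_self hx
  have hyS : y ∈ Icc a b := Ioo_subset_Icc_self hy
  have hdx := convexOn_diffWithinAt_Iio h hx
  have hdy := convexOn_diffWithinAt_Iio h hy
  have h1 : derivWithin G (Iio x) x ≤ slope G x y := by
    have hd := hdx.hasDerivWithinAt
    have htend := (hasDerivWithinAt_iff_tendsto_slope' self_notMem_Iio).1 hd
    refine le_of_tendsto htend ?_
    filter_upwards [Ioo_mem_nhdsLT hx.1] with z hz
    exact h.slope_mono hxS ⟨⟨hz.1.le, (hz.2.trans hx.2).le⟩, hz.2.ne⟩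
      ⟨hyS, hlt.ne'⟩ (hz.2.le.trans hlt.le)
  exact h1.trans (h.slope_le_leftDeriv hxS hyS hlt hdy)

/-- Key convexity estimate: if `μ₀ - μ` changes sign once at `t₁` and both have the
same `F'`-weighted mass, then the `G'(F)`-weighted integral of `μ` is at most
that of `μ₀`, where `G'` is the left derivative of the convex function `G`. -/
theorem convexity_estimate
    (t₀ t₁ : ℝ) (ht₁ : t₁ < t₀)
    (F : ℝ → ℝ) (hF : ContDiff ℝ (⊤ : ℕ∞) F) (hFmono : StrictMono F)
    (hF0 : Tendsto F atBot (nhds 0))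
    (G : ℝ → ℝ) (hGconv : ConvexOn ℝ (Icc 0 (F t₀)) G)
    (hGcont : ContinuousOn G (Icc 0 (F t₀))) (hG0 : G 0 = 0)
    (μ μ₀ : ℝ → ℝ)
    (hμnn : ∀ t < t₀, 0 ≤ μ t) (hμ₀nn : ∀ t < t₀, 0 ≤ μ₀ t)
    (hbelow : ∀ t ≤ t₁, μ₀ t ≤ μ t)
    (habove : ∀ t ∈ Ioo t₁ t₀, μ t ≤ μ₀ t)
    (hμint : IntegrableOn (fun t => deriv F t * μ t) (Iio t₀))
    (hμ₀int : IntegrableOn (fun t => deriv F t * μ₀ t) (Iio t₀))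
    (hmass : ∫ t in Iio t₀, deriv F t * μ t = ∫ t in Iio t₀, deriv F t * μ₀ t)
    (hGint : IntegrableOn (fun t => derivWithin G (Iio (F t)) (F t) * deriv F t * μ t) (Iio t₀))
    (hG₀int : IntegrableOn (fun t => derivWithin G (Iio (F t)) (F t) * deriv F t * μ₀ t) (Iio t₀)) :
    ∫ t in Iio t₀, derivWithin G (Iio (F t)) (F t) * deriv F t * μ t ≤
      ∫ t in Iio t₀, derivWithin G (Iio (F t)) (F t) * deriv F t * μ₀ t := by
  set g : ℝ → ℝ := fun t => derivWithin G (Iio (F t)) (F t) with hg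
  set c : ℝ := g t₁ with hc
  -- positivity of F
  have hFpos : ∀ t : ℝ, 0 < F t := by
    intro t
    have h1 : (0 : ℝ) ≤ F (t - 1) := by
      refine le_of_tendsto hF0 ?_
      filter_upwards [eventually_le_atBot (t - 1)] with s hs
      exact hFmono.monotone hs
    exact lt_of_le_of_lt h1 (hFmono (by linarith))
  have hFin : ∀ t, t < t₀ → F t ∈ Ioo 0 (F t₀) := fun t ht => ⟨hFpos t, hFmono ht⟩
  -- nonnegativity of deriv F
  have hF'nn : ∀ t : ℝ, 0 ≤ deriv F t := by
    intro t
    have hd : HasDerivAt F (deriv F t) t :=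
      (hF.differentiable (by simp)).differentiableAt.hasDerivAt
    have htend := hasDerivAt_iff_tendsto_slope.1 hd
    refine ge_of_tendsto htend ?_
    filter_upwards [self_mem_nhdsWithin] with y hy
    rw [slope_def_field]
    rcases lt_or_gt_of_ne (Ne.symm hy) with h | h
    · exact div_nonneg_iff.2 (Or.inl ⟨sub_nonneg.2 (hFmono.monotone h.le), by linarith⟩)
    · exact div_nonneg_iff.2 (Or.inr ⟨sub_nonpos.2 (hFmono.monotone h.le), by linarith⟩)
  -- monotonicity of g on (-∞, t₀)
  have hgmono : ∀ s t : ℝ, s < t₀ → t < t₀ → s ≤ t → g s ≤ g t := fun s t hs ht hst =>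
    convexOn_leftDeriv_mono hGconv (hFin s hs) (hFin t ht) (hFmono.monotone hst)
  -- pointwise nonnegativity
  have hpt : ∀ t ∈ Iio t₀, 0 ≤ (g t - c) * (deriv F t * (μ₀ t - μ t)) := by
    intro t ht
    rcases le_or_gt t t₁ with h | h
    · have h1 : g t - c ≤ 0 := sub_nonpos.2 (hgmono t t₁ ht ht₁ h)
      have h2 : deriv F t * (μ₀ t - μ t) ≤ 0 :=
        mul_nonpos_of_nonneg_of_nonpos (hF'nn t) (sub_nonpos.2 (hbelow t h))
      exact mul_nonneg_iff.2 (Or.inr ⟨h1, h2⟩)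
    · have h1 : 0 ≤ g t - c := sub_nonneg.2 (hgmono t₁ t ht₁ ht h.le)
      have h2 : 0 ≤ deriv F t * (μ₀ t - μ t) :=
        mul_nonneg (hF'nn t) (sub_nonneg.2 (habove t ⟨h, ht⟩))
      exact mul_nonneg h1 h2
  -- integrability pieces
  have hint1 : IntegrableOn (fun t => g t * deriv F t * μ₀ t - g t * deriv F t * μ t) (Iio t₀) :=
    hG₀int.sub hGint
  have hint2 : IntegrableOn
      (fun t => c * (deriv F t * μ₀ t) - c * (deriv F t * μ t)) (Iio t₀) :=
    (hμ₀int.const_mul c).sub (hμint.const_mul c)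
  have h0 : 0 ≤ ∫ t in Iio t₀,
      ((g t * deriv F t * μ₀ t - g t * deriv F t * μ t) -
        (c * (deriv F t * μ₀ t) - c * (deriv F t * μ t))) := by
    refine setIntegral_nonneg measurableSet_Iio fun t ht => ?_
    have heq : (g t * deriv F t * μ₀ t - g t * deriv F t * μ t) -
        (c * (deriv F t * μ₀ t) - c * (deriv F t * μ t)) =
        (g t - c) * (deriv F t * (μ₀ t - μ t)) := by ring
    rw [heq]
    exact hpt t ht
  rw [integral_sub hint1 hint2, integral_sub hG₀int hGint,
    integral_sub (hμ₀int.const_mul c) (hμint.const_mul c),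
    integral_const_mul c _, integral_const_mul c _, hmass, sub_self, sub_zero] at h0
  linarith
end

section
/- In the setting of the previous convexity estimate, if equality holds and both integrals are finite, and additionally μ(t) < μ₀(t) for t ∈ (t₁, t₀) and μ₀(t) < μ(t) for all sufficiently negative t, then G'(F(t)) is constant for all t < t₀; hence G is linear on [0, F(t₀)]. -/
open Set MeasureTheory Real Filter
open Topology

/-- Existence of the left derivative of a convex function at an interior point. -/
private lemma leftDeriv_exists {B : ℝ} {G : ℝ → ℝ} (hG : ConvexOn ℝ (Icc 0 B) G)
    {x : ℝ} (hx : x ∈ Ioo 0 B) :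
    HasDerivWithinAt G (derivWithin G (Iio x) x) (Iio x) x := by
  have hxS : x ∈ Icc 0 B := ⟨hx.1.le, hx.2.le⟩
  have hmono := hG.slope_mono hxS
  have hsub : Ioo 0 x ⊆ Icc 0 B \ {x} := fun w hw =>
    ⟨⟨hw.1.le, hw.2.le.trans hx.2.le⟩, ne_of_lt hw.2⟩
  have hBmem : B ∈ Icc 0 B \ {x} := ⟨⟨(hx.1.trans hx.2).le, le_refl _⟩, ne_of_gt hx.2⟩
  have hbdd : BddAbove (slope G x '' Ioo 0 x) := by
    refine ⟨slope G x B, ?_⟩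
    rintro _ ⟨w, hw, rfl⟩
    exact hmono (hsub hw) hBmem (hw.2.le.trans hx.2.le)
  have htend := MonotoneOn.tendsto_nhdsWithin_Ioo_left (nonempty_Ioo.2 hx.1)
    (hmono.mono hsub) hbdd
  have hd : HasDerivWithinAt G (sSup (slope G x '' Ioo 0 x)) (Iio x) x :=
    (hasDerivWithinAt_iff_tendsto_slope' notMem_Iio_self).2 htend
  rwa [hd.derivWithin (uniqueDiffWithinAt_Iio x)]

/-- The left derivative of a convex function is at most any slope to the right. -/
private lemma leftDeriv_le_slope {B : ℝ} {G : ℝ → ℝ} (hG : ConvexOn ℝ (Icc 0 B) G)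
    {x y : ℝ} (hx : x ∈ Ioo 0 B) (hy : y ∈ Icc 0 B) (hxy : x < y) :
    derivWithin G (Iio x) x ≤ slope G x y := by
  have hd := leftDeriv_exists hG hx
  have ht := (hasDerivWithinAt_iff_tendsto_slope' notMem_Iio_self).1 hd
  refine le_of_tendsto ht ?_
  filter_upwards [Ioo_mem_nhdsLT hx.1] with w hw
  exact hG.slope_mono ⟨hx.1.le, hx.2.le⟩
    ⟨⟨hw.1.le, hw.2.le.trans hx.2.le⟩, ne_of_lt hw.2⟩
    ⟨hy, ne_of_gt hxy⟩ (hw.2.le.trans hxy.le)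

/-- Equality case of the convexity estimate: if equality holds, `μ < μ₀` strictly on
`(t₁, t₀)` and `μ₀ < μ` for all sufficiently negative `t`, then the left derivative
`G'(F(t))` is constant for `t < t₀`, hence `G` is linear on `[0, F(t₀)]`. -/
theorem convexity_estimate_equality_case
    (t₀ t₁ : ℝ) (ht₁ : t₁ < t₀)
    (F : ℝ → ℝ) (hF : ContDiff ℝ (⊤ : ℕ∞) F) (hFmono : StrictMono F)
    (hF0 : Tendsto F atBot (nhds 0))
    (G : ℝ → ℝ) (hGconv : ConvexOn ℝ (Icc 0 (F t₀)) G)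
    (hGcont : ContinuousOn G (Icc 0 (F t₀))) (hG0 : G 0 = 0)
    (μ μ₀ : ℝ → ℝ)
    (hμnn : ∀ t < t₀, 0 ≤ μ t) (hμ₀nn : ∀ t < t₀, 0 ≤ μ₀ t)
    (hbelow : ∀ t ≤ t₁, μ₀ t ≤ μ t)
    (habove : ∀ t ∈ Ioo t₁ t₀, μ t < μ₀ t)
    (hstrict : ∃ T < t₀, ∀ t ≤ T, μ₀ t < μ t)
    (hμint : IntegrableOn (fun t => deriv F t * μ t) (Iio t₀))
    (hμ₀int : IntegrableOn (fun t => deriv F t * μ₀ t) (Iio t₀))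
    (hmass : ∫ t in Iio t₀, deriv F t * μ t = ∫ t in Iio t₀, deriv F t * μ₀ t)
    (hGint : IntegrableOn (fun t => derivWithin G (Iio (F t)) (F t) * deriv F t * μ t) (Iio t₀))
    (hG₀int : IntegrableOn (fun t => derivWithin G (Iio (F t)) (F t) * deriv F t * μ₀ t) (Iio t₀))
    (heq : ∫ t in Iio t₀, derivWithin G (Iio (F t)) (F t) * deriv F t * μ t =
      ∫ t in Iio t₀, derivWithin G (Iio (F t)) (F t) * deriv F t * μ₀ t) :
    (∀ s < t₀, ∀ t < t₀, derivWithin G (Iio (F s)) (F s) = derivWithin G (Iio (F t)) (F t)) ∧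
    ∃ a : ℝ, ∀ x ∈ Icc 0 (F t₀), G x = a * x := by
  -- Positivity of F
  have hFnn : ∀ t, 0 ≤ F t := by
    intro t
    refine le_of_tendsto hF0 ?_
    filter_upwards [eventually_le_atBot t] with s hs
    exact hFmono.monotone hs
  have hFpos : ∀ t, 0 < F t := fun t =>
    lt_of_le_of_lt (hFnn (t - 1)) (hFmono (by linarith))
  have hB : 0 < F t₀ := hFpos t₀
  have hFmem : ∀ {t}, t < t₀ → F t ∈ Ioo 0 (F t₀) := fun ht => ⟨hFpos _, hFmono ht⟩
  have hFmemIcc : ∀ {t}, t < t₀ → F t ∈ Icc 0 (F t₀) :=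
    fun ht => ⟨(hFpos _).le, (hFmono ht).le⟩
  -- Monotonicity of the left derivative along F
  have gmono : ∀ s t : ℝ, s < t₀ → t < t₀ → s ≤ t →
      derivWithin G (Iio (F s)) (F s) ≤ derivWithin G (Iio (F t)) (F t) := by
    intro s t hs ht hst
    rcases eq_or_lt_of_le hst with rfl | h
    · exact le_refl _
    · calc derivWithin G (Iio (F s)) (F s) ≤ slope G (F s) (F t) :=
            leftDeriv_le_slope hGconv (hFmem hs) (hFmemIcc ht) (hFmono h)
        _ ≤ derivWithin G (Iio (F t)) (F t) :=
            hGconv.slope_le_leftDeriv (hFmemIcc hs) (hFmemIcc ht) (hFmono h)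
              (leftDeriv_exists hGconv (hFmem ht)).differentiableWithinAt
  -- nonnegativity of deriv F
  have hF' : ∀ t, 0 ≤ deriv F t := by
    intro t
    have hd : HasDerivWithinAt F (deriv F t) (Ioi t) t :=
      ((hF.differentiable (by simp) t).hasDerivAt).hasDerivWithinAt
    refine ge_of_tendsto ((hasDerivWithinAt_iff_tendsto_slope'
      notMem_Ioi_self).1 hd) ?_
    filter_upwards [self_mem_nhdsWithin] with w hw
    rw [slope_def_field]
    exact div_nonneg (sub_nonneg.2 (hFmono.monotone (le_of_lt hw)))
      (sub_nonneg.2 (le_of_lt hw))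
  set c := derivWithin G (Iio (F t₁)) (F t₁) with hc
  set h : ℝ → ℝ := fun t => derivWithin G (Iio (F t)) (F t) * deriv F t * μ t
      - derivWithin G (Iio (F t)) (F t) * deriv F t * μ₀ t
      - c * (deriv F t * μ t) + c * (deriv F t * μ₀ t) with hhdef
  have hI_AB : IntegrableOn (fun t => derivWithin G (Iio (F t)) (F t) * deriv F t * μ t
      - derivWithin G (Iio (F t)) (F t) * deriv F t * μ₀ t) (Iio t₀) := hGint.sub hG₀int
  have hI_C : IntegrableOn (fun t => c * (deriv F t * μ t)) (Iio t₀) := hμint.const_mul c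
  have hI_D : IntegrableOn (fun t => c * (deriv F t * μ₀ t)) (Iio t₀) := hμ₀int.const_mul c
  have hI_ABC : IntegrableOn (fun t => derivWithin G (Iio (F t)) (F t) * deriv F t * μ t
      - derivWithin G (Iio (F t)) (F t) * deriv F t * μ₀ t
      - c * (deriv F t * μ t)) (Iio t₀) := hI_AB.sub hI_C
  have hint : IntegrableOn h (Iio t₀) := hI_ABC.add hI_D
  have hzero : ∫ t in Iio t₀, h t = 0 := by
    have e1 : ∫ t in Iio t₀, h t =
        (∫ t in Iio t₀, derivWithin G (Iio (F t)) (F t) * deriv F t * μ t)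
        - (∫ t in Iio t₀, derivWithin G (Iio (F t)) (F t) * deriv F t * μ₀ t)
        - c * (∫ t in Iio t₀, deriv F t * μ t)
        + c * (∫ t in Iio t₀, deriv F t * μ₀ t) := by
      simp only [hhdef]
      rw [integral_add hI_ABC hI_D, integral_sub hI_AB hI_C,
        integral_sub hGint hG₀int, integral_const_mul, integral_const_mul]
    rw [e1, heq, hmass]; ring
  have hkey : ∀ t, h t = (derivWithin G (Iio (F t)) (F t) - c) * deriv F t * (μ t - μ₀ t) := by
    intro t; simp only [hhdef]; ring
  have hnonpos : ∀ t ∈ Iio t₀, h t ≤ 0 := by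
    intro t ht
    rw [hkey]
    rcases le_or_gt t t₁ with h1 | h1
    · have hgc : derivWithin G (Iio (F t)) (F t) ≤ c := gmono t t₁ ht ht₁ h1
      have hb := hbelow t h1
      have h2 : (derivWithin G (Iio (F t)) (F t) - c) * deriv F t ≤ 0 :=
        mul_nonpos_of_nonpos_of_nonneg (by linarith) (hF' t)
      exact mul_nonpos_of_nonpos_of_nonneg h2 (by linarith)
    · have hgc : c ≤ derivWithin G (Iio (F t)) (F t) := gmono t₁ t ht₁ ht h1.le
      have ha := habove t ⟨h1, ht⟩
      have h2 : 0 ≤ (derivWithin G (Iio (F t)) (F t) - c) * deriv F t :=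
        mul_nonneg (by linarith) (hF' t)
      exact mul_nonpos_of_nonneg_of_nonpos h2 (by linarith)
  have hae0 : ∀ᵐ t ∂(volume.restrict (Iio t₀)), h t = 0 := by
    have hple : (0 : ℝ → ℝ) ≤ᵐ[volume.restrict (Iio t₀)] fun t => -h t :=
      (ae_restrict_iff' measurableSet_Iio).2
        (Eventually.of_forall fun t ht => neg_nonneg.2 (hnonpos t ht))
    have hzero' : ∫ t in Iio t₀, -h t = 0 := by rw [integral_neg, hzero, neg_zero]
    have := (integral_eq_zero_iff_of_nonneg_ae hple hint.neg).1 hzero'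
    filter_upwards [this] with t ht
    have : -h t = 0 := ht
    linarith
  -- key claim: in any subinterval where μ ≠ μ₀, the left derivative takes the value c
  have key : ∀ a b : ℝ, a < b → b ≤ t₀ → (∀ s ∈ Ioo a b, μ s ≠ μ₀ s) →
      ∃ s ∈ Ioo a b, derivWithin G (Iio (F s)) (F s) = c := by
    intro a b hab hb hne
    by_contra hcon
    push_neg at hcon
    have hsub : Ioo a b ⊆ Iio t₀ := fun s hs => lt_of_lt_of_le hs.2 hb
    have hae : ∀ᵐ s ∂(volume.restrict (Ioo a b)), h s = 0 :=
      ae_restrict_of_ae_restrict_of_subset hsub hae0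
    have haemem : ∀ᵐ s ∂(volume.restrict (Ioo a b)), s ∈ Ioo a b :=
      (ae_restrict_iff' measurableSet_Ioo).2 (Eventually.of_forall fun s hs => hs)
    have hF'0 : (fun s => deriv F s) =ᵐ[volume.restrict (Ioo a b)] fun _ => (0 : ℝ) := by
      filter_upwards [hae, haemem] with s hs hmem
      rw [hkey] at hs
      have h1 : derivWithin G (Iio (F s)) (F s) - c ≠ 0 := sub_ne_zero.2 (hcon s hmem)
      have h2 : μ s - μ₀ s ≠ 0 := sub_ne_zero.2 (hne s hmem)
      rcases mul_eq_zero.1 hs with h3 | h3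
      · rcases mul_eq_zero.1 h3 with h4 | h4
        · exact absurd h4 h1
        · exact h4
      · exact absurd h3 h2
    have hint0 : ∫ s in Ioo a b, deriv F s = 0 := by
      rw [integral_congr_ae hF'0]; simp
    have hFTC : ∫ s in a..b, deriv F s = F b - F a :=
      intervalIntegral.integral_deriv_eq_sub
        (fun x _ => hF.differentiable (by simp) x)
        ((hF.continuous_deriv (by simp)).intervalIntegrable a b)
    have he : ∫ s in a..b, deriv F s = ∫ s in Ioo a b, deriv F s := by
      rw [intervalIntegral.integral_of_le hab.le, integral_Ioc_eq_integral_Ioo]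
    have hlt : F a < F b := hFmono hab
    rw [hFTC, hint0] at he
    linarith
  -- the derivative is bounded above by c
  have gle : ∀ t, t < t₀ → derivWithin G (Iio (F t)) (F t) ≤ c := by
    intro t ht
    obtain ⟨s, hs, hgs⟩ := key (max t t₁) t₀ (max_lt ht ht₁) le_rfl
      (fun s hs => ne_of_lt (habove s ⟨lt_of_le_of_lt (le_max_right t t₁) hs.1, hs.2⟩))
    rw [← hgs]
    exact gmono t s ht hs.2 ((le_max_left t t₁).trans hs.1.le)
  -- and below by c
  have gge : ∀ t, t < t₀ → c ≤ derivWithin G (Iio (F t)) (F t) := by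
    intro t ht
    obtain ⟨T, hT, hTs⟩ := hstrict
    obtain ⟨s, hs, hgs⟩ := key (min t T - 1) (min t T) (by linarith)
      ((min_le_right t T).trans hT.le)
      (fun s hs => ne_of_gt (hTs s (hs.2.le.trans (min_le_right t T))))
    rw [← hgs]
    exact gmono s t (lt_of_lt_of_le hs.2 ((min_le_right t T).trans hT.le)) ht
      (hs.2.le.trans (min_le_left t T))
  have gconst : ∀ t, t < t₀ → derivWithin G (Iio (F t)) (F t) = c :=
    fun t ht => le_antisymm (gle t ht) (gge t ht)
  constructor
  · intro s hs t ht
    rw [gconst s hs, gconst t ht]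
  -- linearity of G
  refine ⟨c, ?_⟩
  -- surjectivity of F onto (0, F t₀)
  have hsurj : ∀ x ∈ Ioo 0 (F t₀), ∃ t < t₀, F t = x := by
    intro x hx
    obtain ⟨t', ht'x, ht'mem⟩ : ∃ t', x < F t' ∧ t' ∈ Iio t₀ := by
      have h1 : ∀ᶠ s in 𝓝[<] t₀, x < F s :=
        ((hF.continuous.tendsto t₀).eventually (eventually_gt_nhds hx.2)).filter_mono
          nhdsWithin_le_nhds
      exact (h1.and eventually_mem_nhdsWithin).exists
    obtain ⟨s, hs1, hs2⟩ : ∃ s, F s < x ∧ s ≤ t' := by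
      have h1 : ∀ᶠ s in atBot, F s < x := hF0.eventually (eventually_lt_nhds hx.1)
      exact (h1.and (eventually_le_atBot t')).exists
    obtain ⟨u, hu, huv⟩ := intermediate_value_Icc hs2 hF.continuous.continuousOn
      (⟨hs1.le, ht'x.le⟩ : x ∈ Icc (F s) (F t'))
    exact ⟨u, lt_of_le_of_lt hu.2 ht'mem, huv⟩
  have hld : ∀ x ∈ Ioo 0 (F t₀), derivWithin G (Iio x) x = c := by
    intro x hx
    obtain ⟨t, ht, rfl⟩ := hsurj x hx
    exact gconst t ht
  -- slopes are all equal to c on the open interval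
  have hslope : ∀ x z : ℝ, 0 < x → x < z → z < F t₀ → G z - G x = c * (z - x) := by
    intro x z hx hxz hz
    have hxm : x ∈ Ioo 0 (F t₀) := ⟨hx, hxz.trans hz⟩
    have hzm : z ∈ Ioo 0 (F t₀) := ⟨hx.trans hxz, hz⟩
    have h1 : slope G x z ≤ c := by
      have := hGconv.slope_le_leftDeriv ⟨hx.le, (hxz.trans hz).le⟩
        ⟨(hx.trans hxz).le, hz.le⟩ hxz
        (leftDeriv_exists hGconv hzm).differentiableWithinAt
      rwa [hld z hzm] at this
    have h2 : c ≤ slope G x z := by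
      have := leftDeriv_le_slope hGconv hxm ⟨(hx.trans hxz).le, hz.le⟩ hxz
      rwa [hld x hxm] at this
    have h3 : slope G x z = c := le_antisymm h1 h2
    rw [slope_def_field, div_eq_iff (sub_ne_zero.2 (ne_of_gt hxz))] at h3
    linarith [h3]
  -- G is linear on the open interval
  have hopen : ∀ z ∈ Ioo 0 (F t₀), G z = c * z := by
    intro z hz
    haveI : (𝓝[Ioo 0 z] (0:ℝ)).NeBot := by
      rw [nhdsWithin_Ioo_eq_nhdsGT hz.1]; infer_instance
    have hIsub : Ioo (0:ℝ) z ⊆ Icc 0 (F t₀) :=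
      fun w hw => ⟨hw.1.le, (hw.2.le.trans hz.2.le)⟩
    have hcont0 : Tendsto G (𝓝[Ioo 0 z] 0) (𝓝 0) := by
      have hcw : Tendsto G (𝓝[Ioo 0 z] 0) (𝓝 (G 0)) :=
        (hGcont 0 ⟨le_refl 0, hB.le⟩).mono hIsub
      rwa [hG0] at hcw
    have h2 : Tendsto (fun x => G z - c * (z - x)) (𝓝[Ioo 0 z] 0) (𝓝 (G z - c * z)) := by
      have hcc : Continuous fun x : ℝ => G z - c * (z - x) :=
        continuous_const.sub (continuous_const.mul (continuous_const.sub continuous_id))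
      have := (hcc.tendsto 0).mono_left (nhdsWithin_le_nhds (s := Ioo 0 z))
      simpa using this
    have h3 : Tendsto G (𝓝[Ioo 0 z] 0) (𝓝 (G z - c * z)) := by
      refine Tendsto.congr' ?_ h2
      filter_upwards [self_mem_nhdsWithin] with x hx
      have := hslope x z hx.1 hx.2 hz.2
      linarith
    have := tendsto_nhds_unique h3 hcont0
    linarith
  intro x hx
  rcases eq_or_lt_of_le hx.1 with h0 | h0
  · rw [← h0, hG0]; ring
  rcases eq_or_lt_of_le hx.2 with hB' | hB'
  · haveI : (𝓝[Ioo 0 (F t₀)] (F t₀)).NeBot := by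
      rw [nhdsWithin_Ioo_eq_nhdsLT hB]; infer_instance
    have hcB : Tendsto G (𝓝[Ioo 0 (F t₀)] (F t₀)) (𝓝 (G (F t₀))) :=
      (hGcont (F t₀) ⟨hB.le, le_refl _⟩).mono Ioo_subset_Icc_self
    have h2 : Tendsto (fun y : ℝ => c * y) (𝓝[Ioo 0 (F t₀)] (F t₀)) (𝓝 (c * F t₀)) :=
      ((continuous_const.mul continuous_id).tendsto (F t₀)).mono_left nhdsWithin_le_nhds
    have h3 : Tendsto G (𝓝[Ioo 0 (F t₀)] (F t₀)) (𝓝 (c * F t₀)) := by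
      refine Tendsto.congr' ?_ h2
      filter_upwards [self_mem_nhdsWithin] with y hy
      exact (hopen y hy).symm
    rw [hB']
    exact tendsto_nhds_unique hcB h3
  · exact hopen x ⟨h0, hB'⟩
end

section
/- Let f be an entire function with (2α/π)∫_ℂ |f(z)|² e^{-α|z|²} dA(z) = 1, α > 0, and let Ω ⊆ ℂ be measurable with finite Lebesgue measure |Ω|. Then ∫_Ω |f(z)|² e^{-α|z|²} dA(z) ≤ ∫_0^{|Ω|} e^{-α s/π} ds = (π/α)(1 - e^{-α|Ω|/π}). -/
/-!
Translating by the Fock-space shift and applying the mean value property on every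
circle centred at the origin gives the pointwise bound
`|f z|² e^{-α|z|²} ≤ (α/π) ∫ |f|² e^{-α|·|²} = 1/2`. Integrating it over `Ω` and comparing with
the total mass `π/(2α)` bounds the concentration by `(π/α) min (t/2, 1/2)` with `t = α|Ω|/π`,
and `min (t/2, 1/2) ≤ t/(1+t) ≤ 1 - e^{-t}`.
-/

open MeasureTheory Real Set
open scoped ENNReal

lemma Complex.polarCoord_symm_eq_circleMap (p : ℝ × ℝ) :
    Complex.polarCoord.symm p = circleMap 0 p.1 p.2 := by
  rw [Complex.polarCoord_symm_apply, circleMap, Complex.exp_mul_I]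
  simp only [Complex.ofReal_cos, Complex.ofReal_sin, zero_add]

lemma lintegral_eq_lintegral_Ioi_lintegral_circleMap {F : ℂ → ℝ≥0∞} (hF : Measurable F) :
    ∫⁻ z, F z = ∫⁻ r in Ioi 0, ENNReal.ofReal r * ∫⁻ θ in Ioo (-π) π, F (circleMap 0 r θ) := by
  have hmeas : Measurable fun p : ℝ × ℝ => ENNReal.ofReal p.1 * F (circleMap 0 p.1 p.2) := by
    fun_prop
  rw [← Complex.lintegral_comp_polarCoord_symm]
  simp_rw [Complex.polarCoord_symm_eq_circleMap, smul_eq_mul]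
  rw [polarCoord_target, Measure.volume_eq_prod, setLIntegral_prod _ hmeas.aemeasurable]
  refine setLIntegral_congr_fun measurableSet_Ioi fun r _ => ?_
  dsimp only
  exact lintegral_const_mul _ (hF.comp (continuous_circleMap 0 r).measurable)

lemma ofReal_two_pi_mul_enorm_le_lintegral_circleMap {g : ℂ → ℂ} {c : ℂ} {r : ℝ}
    (hg : DiffContOnCl ℂ g (Metric.ball c |r|)) :
    ENNReal.ofReal (2 * π) * ‖g c‖ₑ ≤ ∫⁻ θ in Ioo (-π) π, ‖g (circleMap c r θ)‖ₑ := by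
  have hmean : (2 * π : ℝ) • g c = ∫ θ in (-π)..π, g (circleMap c r θ) := by
    rw [← hg.circleAverage, circleAverage_eq_integral_add (-π),
      intervalIntegral.integral_comp_add_right (fun θ => g (circleMap c r θ)), smul_smul,
      mul_inv_cancel₀ (by positivity), one_smul]
    norm_num [two_mul]
  calc ENNReal.ofReal (2 * π) * ‖g c‖ₑ = ‖(2 * π : ℝ) • g c‖ₑ := by
        rw [enorm_smul, Real.enorm_of_nonneg (by positivity)]
    _ = ‖∫ θ in Ioc (-π) π, g (circleMap c r θ)‖ₑ := by
        rw [hmean, intervalIntegral.integral_of_le (by linarith [pi_pos])]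
    _ ≤ ∫⁻ θ in Ioc (-π) π, ‖g (circleMap c r θ)‖ₑ := enorm_integral_le_lintegral_enorm _
    _ = ∫⁻ θ in Ioo (-π) π, ‖g (circleMap c r θ)‖ₑ := setLIntegral_congr Ioo_ae_eq_Ioc.symm

lemma enorm_mul_lintegral_radial_le {g : ℂ → ℂ} (hg : Differentiable ℂ g) {w : ℝ → ℝ≥0∞}
    (hw : Measurable w) :
    ‖g 0‖ₑ * ∫⁻ z : ℂ, w ‖z‖ ≤ ∫⁻ z, ‖g z‖ₑ * w ‖z‖ := by
  rw [lintegral_eq_lintegral_Ioi_lintegral_circleMap (F := fun z => w ‖z‖)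
      (hw.comp measurable_norm),
    lintegral_eq_lintegral_Ioi_lintegral_circleMap (F := fun z => ‖g z‖ₑ * w ‖z‖)
      (hg.continuous.measurable.enorm.mul (hw.comp measurable_norm)),
    ← lintegral_const_mul' _ _ enorm_ne_top]
  refine lintegral_mono fun r => ?_
  have hgθ : Measurable fun θ => ‖g (circleMap 0 r θ)‖ₑ :=
    (hg.continuous.comp (continuous_circleMap 0 r)).enorm.measurable
  simp only [norm_circleMap_zero, lintegral_const, Measure.restrict_apply_univ, volume_Ioo,
    lintegral_mul_const _ hgθ, sub_neg_eq_add, ← two_mul]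
  calc ‖g 0‖ₑ * (ENNReal.ofReal r * (w |r| * ENNReal.ofReal (2 * π)))
      = ENNReal.ofReal r * (w |r| * (ENNReal.ofReal (2 * π) * ‖g 0‖ₑ)) := by ring
    _ ≤ ENNReal.ofReal r * (w |r| * ∫⁻ θ in Ioo (-π) π, ‖g (circleMap 0 r θ)‖ₑ) := by
        gcongr
        exact ofReal_two_pi_mul_enorm_le_lintegral_circleMap hg.diffContOnCl
    _ = ENNReal.ofReal r * ((∫⁻ θ in Ioo (-π) π, ‖g (circleMap 0 r θ)‖ₑ) * w |r|) := by ring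

lemma lintegral_ofReal_exp_neg_mul_norm_sq {α : ℝ} (hα : 0 < α) :
    ∫⁻ z : ℂ, ENNReal.ofReal (exp (-(α * ‖z‖ ^ 2))) = ENNReal.ofReal (π / α) := by
  have h : ∫ z : ℂ, exp (-(α * ‖z‖ ^ 2)) = π / α := by
    simpa using GaussianFourier.integral_rexp_neg_mul_sq_norm (V := ℂ) hα
  rw [← ofReal_integral_eq_lintegral_ofReal
    (Integrable.of_integral_ne_zero (by rw [h]; positivity))
    (ae_of_all _ fun z => (exp_pos _).le), h]

theorem norm_apply_zero_mul_le_integral_norm_mul_gaussian {α : ℝ} (hα : 0 < α) {g : ℂ → ℂ}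
    (hg : Differentiable ℂ g) (hint : Integrable fun z => ‖g z‖ * exp (-(α * ‖z‖ ^ 2))) :
    ‖g 0‖ * (π / α) ≤ ∫ z, ‖g z‖ * exp (-(α * ‖z‖ ^ 2)) := by
  have key := enorm_mul_lintegral_radial_le hg
    (w := fun r => ENNReal.ofReal (exp (-(α * r ^ 2)))) (by fun_prop)
  rw [lintegral_ofReal_exp_neg_mul_norm_sq hα] at key
  rw [← ENNReal.ofReal_le_ofReal_iff (integral_nonneg fun z => by positivity),
    ofReal_integral_eq_lintegral_ofReal hint (ae_of_all _ fun z => by positivity)]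
  simpa [ENNReal.ofReal_mul, ofReal_norm] using key

/-- Since `|exp (-α (2 ā w + |a|²))| * exp (-α |w|²) = exp (-α |w + a|²)`, the shift moves the
point `a` of the weighted modulus `|h| exp (-α |·|²)` to the origin. -/
noncomputable def fockShift (α : ℝ) (a : ℂ) (h : ℂ → ℂ) (w : ℂ) : ℂ :=
  h (w + a) * Complex.exp (-(α * (2 * starRingEnd ℂ a * w + (‖a‖ ^ 2 : ℝ))))

lemma Differentiable.fockShift {h : ℂ → ℂ} (hh : Differentiable ℂ h) (α : ℝ) (a : ℂ) :
    Differentiable ℂ (fockShift α a h) := by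
  unfold _root_.fockShift
  fun_prop

lemma norm_fockShift_mul_exp (α : ℝ) (a : ℂ) (h : ℂ → ℂ) (w : ℂ) :
    ‖fockShift α a h w‖ * exp (-(α * ‖w‖ ^ 2)) = ‖h (w + a)‖ * exp (-(α * ‖w + a‖ ^ 2)) := by
  have hsq : ‖w + a‖ ^ 2 = ‖w‖ ^ 2 + 2 * (starRingEnd ℂ a * w).re + ‖a‖ ^ 2 := by
    simp only [Complex.sq_norm, Complex.normSq_add, mul_comm w]
    ring
  rw [fockShift, norm_mul, Complex.norm_exp, mul_assoc, ← exp_add, hsq]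
  congr 2
  simp only [Complex.neg_re, Complex.mul_re, Complex.add_re, Complex.ofReal_re, Complex.ofReal_im,
    Complex.re_ofNat, Complex.im_ofNat, Complex.conj_re, Complex.conj_im, Complex.mul_im]
  ring

theorem norm_mul_gaussian_mul_le_integral_norm_mul_gaussian {α : ℝ} (hα : 0 < α) {h : ℂ → ℂ}
    (hh : Differentiable ℂ h) (hint : Integrable fun z => ‖h z‖ * exp (-(α * ‖z‖ ^ 2)))
    (a : ℂ) :
    ‖h a‖ * exp (-(α * ‖a‖ ^ 2)) * (π / α) ≤ ∫ z, ‖h z‖ * exp (-(α * ‖z‖ ^ 2)) := by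
  have hshift := funext (norm_fockShift_mul_exp α a h)
  have key := norm_apply_zero_mul_le_integral_norm_mul_gaussian hα (hh.fockShift α a)
    (by rw [hshift]; exact hint.comp_add_right a)
  rwa [hshift, integral_add_right_eq_self (fun z => ‖h z‖ * exp (-(α * ‖z‖ ^ 2))),
    show ‖fockShift α a h 0‖ = ‖h a‖ * exp (-(α * ‖a‖ ^ 2)) by
      simpa using norm_fockShift_mul_exp α a h 0] at key

lemma setIntegral_le_min_mul_measureReal_integral {X : Type*} [MeasurableSpace X]
    {μ : Measure X} {u : X → ℝ} (hint : Integrable u μ) (hu : ∀ x, 0 ≤ u x) {C : ℝ}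
    (hC : ∀ x, u x ≤ C) {s : Set X} (hs : μ s < ⊤) :
    ∫ x in s, u x ∂μ ≤ min (C * μ.real s) (∫ x, u x ∂μ) :=
  le_min
    ((le_abs_self _).trans (norm_setIntegral_le_of_norm_le_const hs fun x _ => by
      rw [Real.norm_of_nonneg (hu x)]; exact hC x))
    (setIntegral_le_integral hint (ae_of_all _ hu))

lemma min_half_le_one_sub_exp_neg {t : ℝ} (ht : 0 ≤ t) :
    min (t / 2) (1 / 2) ≤ 1 - exp (-t) := by
  have hinv : exp (-t) * exp t = 1 := by rw [← exp_add]; simp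
  have hexp := add_one_le_exp t
  have hpos := exp_pos (-t)
  rcases le_total t 1 with h | h
  · exact (min_le_left _ _).trans (by nlinarith)
  · exact (min_le_right _ _).trans (by nlinarith)

theorem fock_faber_krahn_general
    (α : ℝ) (hα : 0 < α) (f : ℂ → ℂ) (hf : Differentiable ℂ f)
    (hnorm : (2 * α / π) * ∫ z : ℂ, ‖f z‖ ^ 2 * Real.exp (-(α * ‖z‖ ^ 2)) = 1)
    (Ω : Set ℂ) (hΩfin : volume Ω < ⊤) :
    ∫ z in Ω, ‖f z‖ ^ 2 * Real.exp (-(α * ‖z‖ ^ 2)) ≤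
      (π / α) * (1 - Real.exp (-(α * (volume Ω).toReal) / π)) := by
  set u : ℂ → ℝ := fun z => ‖f z‖ ^ 2 * exp (-(α * ‖z‖ ^ 2))
  have hint : Integrable u := by
    by_contra h
    rw [integral_undef h, mul_zero] at hnorm
    exact zero_ne_one hnorm
  have htotal : ∫ z, u z = π / (2 * α) := by
    field_simp at hnorm ⊢
    linarith
  have hpointwise : ∀ z, u z ≤ 1 / 2 := by
    intro z
    have key := norm_mul_gaussian_mul_le_integral_norm_mul_gaussian hα
      (h := fun z => f z ^ 2) (hf.pow 2) (by simpa only [norm_pow] using hint) z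
    simp only [norm_pow] at key
    rw [htotal, show π / (2 * α) = 1 / 2 * (π / α) by ring] at key
    exact le_of_mul_le_mul_right key (by positivity)
  calc ∫ z in Ω, u z ≤ min (1 / 2 * volume.real Ω) (π / (2 * α)) :=
        htotal ▸ setIntegral_le_min_mul_measureReal_integral hint (fun z => by positivity)
          hpointwise hΩfin
    _ = π / α * min (α * volume.real Ω / π / 2) (1 / 2) := by
        rw [mul_min_of_nonneg _ _ (by positivity)]
        congr 1 <;> field_simp
    _ ≤ π / α * (1 - exp (-(α * (volume Ω).toReal) / π)) := by
        rw [neg_div]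
        exact mul_le_mul_of_nonneg_left (min_half_le_one_sub_exp_neg (by positivity))
          (by positivity)

/-- Faber–Krahn inequality for the Fock space: a normalized entire function has
concentration at most `(π/α)(1 - e^{-α|Ω|/π})` on any set `Ω` of finite measure. -/
theorem fock_faber_krahn
    (α : ℝ) (hα : 0 < α) (f : ℂ → ℂ) (hf : Differentiable ℂ f)
    (hnorm : (2 * α / π) * ∫ z : ℂ, ‖f z‖ ^ 2 * Real.exp (-(α * ‖z‖ ^ 2)) = 1)
    (Ω : Set ℂ) (hΩ : MeasurableSet Ω) (hΩfin : volume Ω < ⊤) :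
    ∫ z in Ω, ‖f z‖ ^ 2 * Real.exp (-(α * ‖z‖ ^ 2)) ≤
      (π / α) * (1 - Real.exp (-(α * (volume Ω).toReal) / π)) :=
  fock_faber_krahn_general α hα f hf hnorm Ω hΩfin
end
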